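/- Every countably generated free filter on ℕ is block-respecting: for every F-stationary set H and every partition {D_k : k ∈ ℕ} of H into finite sets, there exists an F-stationary set J ⊆ H such that |J ∩ D_k| ≤ 1 for every k. -/

import Mathlib

/-!
Relative to the partition `A`, a set lies in the dual ideal exactly when it meets only finitely
many blocks `A k`, so a stationary `H` meets infinitely many of them. Since each `D k` is finite,
finitely many chosen points rule out only finitely many blocks `A k` (those of the points sharing
a `D`-block with them), so one can greedily pick points of `H` lying in pairwise distinct blocks
`A k` and pairwise distinct blocks `D k`. The set of these points is the required `J`.
-/

/-- A filter on ℕ, as a family of subsets: nonempty (contains `univ`), not containing `∅`,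
closed under finite intersections and supersets. -/
def IsSetFilter (F : Set (Set ℕ)) : Prop :=
  Set.univ ∈ F ∧ ∅ ∉ F ∧ (∀ A ∈ F, ∀ B ∈ F, A ∩ B ∈ F) ∧ ∀ A ∈ F, ∀ B : Set ℕ, A ⊆ B → B ∈ F

/-- A filter is free if its dual ideal contains all finite sets, i.e. the complement of
every finite set belongs to the filter. -/
def IsFreeSetFilter (F : Set (Set ℕ)) : Prop :=
  IsSetFilter F ∧ ∀ S : Set ℕ, S.Finite → Sᶜ ∈ F

/-- `H` is `F`-stationary iff it does not belong to the dual ideal of `F`,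
i.e. `Hᶜ ∉ F`. -/
def FStationary (F : Set (Set ℕ)) (H : Set ℕ) : Prop := Hᶜ ∉ F

/-- The dual ideal of `F` is countably generated by the partition `A` of ℕ into
pairwise disjoint nonempty sets: it consists exactly of the finite unions of subsets
of the sets `A k`. -/
def CountablyGeneratedBy (F : Set (Set ℕ)) (A : ℕ → Set ℕ) : Prop :=
  (∀ k, (A k).Nonempty) ∧ Pairwise (Function.onFun Disjoint A) ∧ (⋃ k, A k) = Set.univ ∧
    ∀ S : Set ℕ, Sᶜ ∈ F ↔ ∃ T : Finset ℕ, ∃ B : ℕ → Set ℕ,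
      (∀ k ∈ T, B k ⊆ A k) ∧ S = ⋃ k ∈ T, B k

/-- `F` is super-diagonal: every stationary set has a stationary subset all of whose
infinite subsets are stationary. -/
def SuperDiagonal (F : Set (Set ℕ)) : Prop :=
  ∀ I : Set ℕ, FStationary F I →
    ∃ J ⊆ I, FStationary F J ∧ ∀ K ⊆ J, K.Infinite → FStationary F K

/-- `F` is diagonal: for every sequence `(A n)` of members of `F` and every stationary
set `I` there exists a stationary `J ⊆ I` with `J \ A n` finite for all `n`. -/
def DiagonalFilter (F : Set (Set ℕ)) : Prop :=
  ∀ A : ℕ → Set ℕ, (∀ n, A n ∈ F) → ∀ I : Set ℕ, FStationary F I →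
    ∃ J ⊆ I, FStationary F J ∧ ∀ n, (J \ A n).Finite

/-- `F` is block-respecting: for every stationary set `H` and every partition `(D k)`
of `H` into finite sets, there is a stationary `J ⊆ H` with `|J ∩ D k| ≤ 1` for all `k`. -/
def BlockRespecting (F : Set (Set ℕ)) : Prop :=
  ∀ H : Set ℕ, FStationary F H → ∀ D : ℕ → Set ℕ, (∀ k, (D k).Finite) →
    Pairwise (Function.onFun Disjoint D) → (⋃ k, D k) = H →
    ∃ J ⊆ H, FStationary F J ∧ ∀ k, (J ∩ D k).Subsingleton

open Set Function

lemma exists_index_of_pairwise_disjoint {ι α : Type*} [Nonempty ι] {D : ι → Set α}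
    (hD : Pairwise (Disjoint on D)) : ∃ idx : α → ι, ∀ x k, x ∈ D k → idx x = k := by
  classical
  refine ⟨fun x => if h : ∃ k, x ∈ D k then h.choose else Classical.arbitrary ι,
    fun x k hx => ?_⟩
  have h : ∃ k, x ∈ D k := ⟨k, hx⟩
  simp only [dif_pos h]
  by_contra hne
  exact disjoint_left.1 (hD hne) h.choose_spec hx

lemma exists_subset_infinite_image_injOn {α β γ : Type*} {H : Set α} (f : α → β) (g : α → γ)
    (hf : (f '' H).Infinite) (hg : ∀ c, {x ∈ H | g x = c}.Finite) :
    ∃ J ⊆ H, (f '' J).Infinite ∧ InjOn g J := by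
  have fresh : ∀ Q : Finset α, (∀ x ∈ Q, x ∈ H) →
      ∃ y, y ∈ H ∧ ∀ x ∈ Q, f x ≠ f y ∧ g x ≠ g y := by
    intro Q _
    have hR : {y ∈ H | g y ∈ g '' Q}.Finite :=
      ((Q.finite_toSet.image g).biUnion fun c _ => hg c).subset
        fun y ⟨hyH, hyQ⟩ => mem_biUnion hyQ ⟨hyH, rfl⟩
    obtain ⟨_, ⟨y, hyH, rfl⟩, hy⟩ :=
      (hf.sdiff ((Q.finite_toSet.image f).union (hR.image f))).nonempty
    exact ⟨y, hyH, fun x hx =>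
      ⟨fun h => hy (Or.inl ⟨x, hx, h⟩), fun h => hy (Or.inr ⟨y, ⟨hyH, x, hx, h⟩, rfl⟩)⟩⟩
  obtain ⟨s, hsH, hs⟩ := exists_seq_of_forall_finset_exists (· ∈ H) _ fresh
  refine ⟨range s, range_subset_iff.2 hsH, ?_, ?_⟩
  · rw [← range_comp]
    exact infinite_range_of_injective (Injective.of_lt_imp_ne fun m n h => (hs m n h).1)
  · rintro _ ⟨m, rfl⟩ _ ⟨n, rfl⟩ h
    rw [Injective.of_lt_imp_ne (fun m n h => (hs m n h).2) h]

namespace CountablyGeneratedBy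

variable {F : Set (Set ℕ)} {A : ℕ → Set ℕ} {idx : ℕ → ℕ}

lemma compl_mem_iff (hgen : CountablyGeneratedBy F A) (hidx : ∀ x k, x ∈ A k → idx x = k)
    (S : Set ℕ) : Sᶜ ∈ F ↔ (idx '' S).Finite := by
  obtain ⟨-, -, hcov, hiff⟩ := hgen
  have hmem : ∀ x, x ∈ A (idx x) := fun x => by
    obtain ⟨k, hk⟩ := mem_iUnion.1 (hcov.symm ▸ mem_univ x : x ∈ ⋃ k, A k)
    rwa [hidx x k hk]
  rw [hiff S]
  constructor
  · rintro ⟨T, B, hB, rfl⟩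
    refine T.finite_toSet.subset ?_
    rintro _ ⟨x, hx, rfl⟩
    obtain ⟨k, hkT, hxk⟩ := mem_iUnion₂.1 hx
    rwa [hidx x k (hB k hkT hxk)]
  · intro hfin
    refine ⟨hfin.toFinset, fun k => S ∩ A k, fun k _ => inter_subset_right, ?_⟩
    ext x
    simp only [mem_iUnion, Finite.mem_toFinset, exists_prop]
    exact ⟨fun hx => ⟨idx x, mem_image_of_mem idx hx, hx, hmem x⟩, fun ⟨_, _, hx, _⟩ => hx⟩

lemma fStationary_iff (hgen : CountablyGeneratedBy F A) (hidx : ∀ x k, x ∈ A k → idx x = k)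
    (S : Set ℕ) : FStationary F S ↔ (idx '' S).Infinite :=
  (hgen.compl_mem_iff hidx S).not

end CountablyGeneratedBy

theorem stmt2_general (F : Set (Set ℕ)) (A : ℕ → Set ℕ)
    (hgen : CountablyGeneratedBy F A) :
    BlockRespecting F := by
  intro H hH D hDfin hDdisj hDcov
  obtain ⟨idxA, hidxA⟩ := exists_index_of_pairwise_disjoint hgen.2.1
  obtain ⟨idxD, hidxD⟩ := exists_index_of_pairwise_disjoint hDdisj
  have hD : ∀ x ∈ H, x ∈ D (idxD x) := by
    rw [← hDcov]
    intro x hx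
    obtain ⟨k, hk⟩ := mem_iUnion.1 hx
    rwa [hidxD x k hk]
  obtain ⟨J, hJH, hJinf, hJinj⟩ := exists_subset_infinite_image_injOn idxA idxD
    ((hgen.fStationary_iff hidxA H).1 hH)
    fun k => (hDfin k).subset fun x ⟨hx, hk⟩ => hk ▸ hD x hx
  refine ⟨J, hJH, (hgen.fStationary_iff hidxA J).2 hJinf, fun k a ha b hb => hJinj ha.1 hb.1 ?_⟩
  rw [hidxD a k ha.2, hidxD b k hb.2]

/-- every countably generated free filter on ℕ is block-respecting. -/
theorem stmt2 (F : Set (Set ℕ)) (A : ℕ → Set ℕ)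
    (hF : IsFreeSetFilter F) (hgen : CountablyGeneratedBy F A) :
    BlockRespecting F :=
  stmt2_general F A hgen
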